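/- A permutation σ of {1,...,n} is 213-avoiding if and only if the sequence x_i = i + (n - i) - c_{n-i}(σ) (with c_m(σ) = #{k ≤ m : σ(k) > σ(m+1)}, x_n = n, and interpreting row sums as counts of ones) is weakly increasing: x_i ≤ x_j for i ≤ j. -/
import Mathlib

/-- Auxiliary count: number of positions `k < m` with `σ k > σ m`. -/
def cCount {n : ℕ} (σ : Equiv.Perm (Fin n)) (m : Fin n) : ℕ :=
  (Finset.univ.filter (fun k : Fin n => k < m ∧ σ m < σ k)).card

lemma cCount_le {n : ℕ} (σ : Equiv.Perm (Fin n)) (m : Fin n) :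
    cCount σ m ≤ m.val := by
  have h : (Finset.univ.filter (fun k : Fin n => k < m ∧ σ m < σ k)) ⊆ Finset.Iio m := by
    intro k hk
    simp only [Finset.mem_filter, Finset.mem_Iio] at *
    exact hk.2.1
  calc cCount σ m ≤ (Finset.Iio m).card := Finset.card_le_card h
    _ = m.val := Fin.card_Iio m

/-- The sequence `x_i = i + (n-i) - c_{n-i}(σ)`, where
`c_m(σ) = #{k ≤ m : σ(k) > σ(m+1)}`; `x_n = n`. -/
def xSeq {n : ℕ} (σ : Equiv.Perm (Fin n)) (i : Fin n) : ℕ :=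
  (i.val + 1) +
    ((n - (i.val + 1)) -
      (Finset.univ.filter (fun k : Fin n =>
        k < (⟨n - (i.val + 1), by have := i.isLt; omega⟩ : Fin n) ∧
          σ ⟨n - (i.val + 1), by have := i.isLt; omega⟩ < σ k)).card)

lemma xSeq_eq {n : ℕ} (σ : Equiv.Perm (Fin n)) (i : Fin n) :
    xSeq σ i = n - cCount σ ⟨n - (i.val + 1), by have := i.isLt; omega⟩ := by
  have hi := i.isLt
  have hc := cCount_le σ (⟨n - (i.val + 1), by omega⟩ : Fin n)
  unfold xSeq cCount at *
  simp only at hc ⊢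
  omega

/-- Avoidance implies `cCount` is weakly increasing. -/
lemma cCount_mono {n : ℕ} (σ : Equiv.Perm (Fin n))
    (H : ¬ ∃ i j k : Fin n, i < j ∧ j < k ∧ σ j < σ i ∧ σ i < σ k)
    {m m' : Fin n} (h : m ≤ m') : cCount σ m ≤ cCount σ m' := by
  rcases eq_or_lt_of_le h with rfl | hlt
  · exact le_refl _
  apply Finset.card_le_card
  intro k hk
  simp only [Finset.mem_filter, Finset.mem_univ, true_and] at hk ⊢
  obtain ⟨hkm, hσ⟩ := hk
  refine ⟨lt_trans hkm hlt, ?_⟩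
  by_contra hne
  push_neg at hne
  have hkm' : k ≠ m' := ne_of_lt (lt_trans hkm hlt)
  have hσk : σ k < σ m' := lt_of_le_of_ne hne (fun e => hkm' (σ.injective e))
  exact H ⟨k, m, m', hkm, hlt, hσ, hσk⟩

/-- A 213 pattern yields a strict descent of `cCount`. -/
lemma cCount_descent {n : ℕ} (σ : Equiv.Perm (Fin n))
    (i j k : Fin n) (hij : i < j) (hjk : j < k) (h1 : σ j < σ i) (h2 : σ i < σ k) :
    ∃ m m' : Fin n, m < m' ∧ cCount σ m' < cCount σ m := by
  classical
  set S : Finset (Fin n) := Finset.univ.filter (fun l => j < l ∧ σ i < σ l) with hS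
  have hkS : k ∈ S := by simp [hS, hjk, h2]
  have hSne : S.Nonempty := ⟨k, hkS⟩
  set m' : Fin n := S.min' hSne with hm'
  have hm'mem : m' ∈ S := S.min'_mem hSne
  have hjm' : j < m' := by
    have := Finset.mem_filter.mp hm'mem
    exact this.2.1
  have hσm' : σ i < σ m' := (Finset.mem_filter.mp hm'mem).2.2
  have hm'pos : 0 < m'.val := lt_of_le_of_lt (Nat.zero_le _) hjm'
  set m : Fin n := ⟨m'.val - 1, by omega⟩ with hm
  have hmm' : m < m' := by
    show m.val < m'.val
    simp [hm]; omega
  have hjm : j ≤ m := by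
    show j.val ≤ m.val
    simp only [hm]
    have : j.val < m'.val := hjm'
    omega
  -- σ m < σ i
  have hσm : σ m < σ i := by
    rcases eq_or_lt_of_le hjm with he | hl
    · rw [← he]; exact h1
    · have hmS : m ∉ S := fun hmem => absurd (S.min'_le m hmem) (not_le.mpr hmm')
      simp only [hS, Finset.mem_filter, Finset.mem_univ, true_and, not_and] at hmS
      have hne : ¬ σ i < σ m := hmS hl
      have hmi : m ≠ i := fun e => absurd hij (by rw [← e]; exact not_lt.mpr (le_of_lt hl))
      exact lt_of_le_of_ne (not_lt.mp hne) (fun e => hmi (σ.injective e))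
  refine ⟨m, m', hmm', ?_⟩
  apply Finset.card_lt_card
  constructor
  · intro l hl
    simp only [Finset.mem_filter, Finset.mem_univ, true_and] at hl ⊢
    obtain ⟨hlm', hσl⟩ := hl
    have hlm : l < m := by
      rcases lt_or_eq_of_le (Nat.le_of_lt_succ (by
        show l.val < m.val + 1
        have : l.val < m'.val := hlm'
        simp only [hm]; omega)) with h | h
      · exact h
      · exfalso
        have : σ m < σ m' := lt_trans hσm hσm'
        have hlm2 : l = m := Fin.ext h
        rw [hlm2] at hσl
        exact absurd hσl (not_lt.mpr (le_of_lt this))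
    exact ⟨hlm, lt_trans (lt_trans hσm hσm') hσl⟩
  · intro hsub
    have him : i < m := lt_of_lt_of_le hij hjm
    have himem : i ∈ Finset.univ.filter (fun l : Fin n => l < m ∧ σ m < σ l) := by
      simp [him, hσm]
    have := hsub himem
    simp only [Finset.mem_filter, Finset.mem_univ, true_and] at this
    exact absurd this.2 (not_lt.mpr (le_of_lt hσm'))

/-- A permutation is 213-avoiding if and only if its associated sequence
`x_i = i + (n-i) - c_{n-i}(σ)` is weakly increasing. -/
theorem stmt11 (n : ℕ) (σ : Equiv.Perm (Fin n)) :
    (¬ ∃ i j k : Fin n, i < j ∧ j < k ∧ σ j < σ i ∧ σ i < σ k) ↔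
      ∀ i j : Fin n, i ≤ j → xSeq σ i ≤ xSeq σ j := by
  constructor
  · intro H i j hij
    rw [xSeq_eq, xSeq_eq]
    have hi := i.isLt
    have hj := j.isLt
    have hle : (⟨n - (j.val + 1), by omega⟩ : Fin n) ≤ ⟨n - (i.val + 1), by omega⟩ := by
      show n - (j.val + 1) ≤ n - (i.val + 1)
      have : i.val ≤ j.val := hij
      omega
    have := cCount_mono σ H hle
    omega
  · intro Hmono H
    obtain ⟨i, j, k, hij, hjk, h1, h2⟩ := H
    obtain ⟨m, m', hmm', hdesc⟩ := cCount_descent σ i j k hij hjk h1 h2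
    have hm := m.isLt
    have hm' := m'.isLt
    have hmlt : m.val < m'.val := hmm'
    set a : Fin n := ⟨n - 1 - m'.val, by omega⟩ with ha
    set b : Fin n := ⟨n - 1 - m.val, by omega⟩ with hb
    have hab : a ≤ b := by
      show n - 1 - m'.val ≤ n - 1 - m.val
      omega
    have h := Hmono a b hab
    rw [xSeq_eq, xSeq_eq] at h
    have e1 : (⟨n - (a.val + 1), by have := a.isLt; omega⟩ : Fin n) = m' := by
      apply Fin.ext
      simp only [ha]
      omega
    have e2 : (⟨n - (b.val + 1), by have := b.isLt; omega⟩ : Fin n) = m := by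
      apply Fin.ext
      simp only [hb]
      omega
    rw [e1, e2] at h
    have hc := cCount_le σ m
    omega
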